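/- arXiv:1603.03902 — 4 statements merged into one kernel-verified Lean document; each statement's English description precedes it below -/
import Mathlib

section
/- Let d ≥ 1, ν = d/2 − 1, p_t^{(d)}(x) = (2πt)^{−d/2} e^{−x²/(2t)}. For any δ > 0 there exists a constant C_δ (depending only on δ and d) such that whenever (x+z)z > δt > 0 and 0 < θ < 1, one has θ^{d/2} ∫_{θt}^{t} p_s^{(d)}(x) p_{t−s}^{(d)}(z) ds ≤ C_δ · p_t^{(d)}(x+z) · ((x+z)/(tz))^ν · √(t/((x+z)z)). -/
/-!
The Gaussian bridge identity `p_s(x) p_{t-s}(z) = p_t(x+z) p_{s(t-s)/t}(y)`, together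
with `θ t ≤ s ≤ t`, bounds `θ^{d/2} p_s(x) p_{t-s}(z)` by `p_t(x+z) p_u(a u - z)`, where `u = t - s`
and `a = (x+z)/t`. The substitution `u = (z/a) e^r` turns `∫_0^∞ p_u(a u - z) du` into
`(2π)^{-d/2} (z/a)^{1-d/2} ∫ exp((1 - d/2) r - a z (cosh r - 1)) dr`. Since
`cosh r - 1 ≥ r²/2` and `a z > δ`, this integrand is at most
`exp((1-d/2)²/δ) exp(-a z r²/4)`, whose integral is `√(4π/(a z)) = √(4π) √(t/((x+z) z))`.
-/

open Real intervalIntegral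

noncomputable def heatKernel (d : ℕ) (t x : ℝ) : ℝ :=
  (2 * Real.pi * t) ^ (-(d : ℝ) / 2) * Real.exp (-x ^ 2 / (2 * t))

open MeasureTheory Set

lemma sq_div_two_le_cosh_sub_one (r : ℝ) : r ^ 2 / 2 ≤ cosh r - 1 := by
  have hsinh : (r / 2) ^ 2 ≤ sinh (r / 2) ^ 2 := by
    rw [sq_le_sq, abs_sinh]
    exact self_le_sinh_iff.2 (abs_nonneg _)
  have hcosh := cosh_two_mul (r / 2)
  rw [cosh_sq, show 2 * (r / 2) = r by ring] at hcosh
  linarith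

lemma exp_mul_sub_mul_cosh_le (b : ℝ) {δ w : ℝ} (hδ : 0 < δ) (hw : δ ≤ w) (r : ℝ) :
    exp (b * r - w * (cosh r - 1)) ≤ exp (b ^ 2 / δ) * exp (-(w / 4) * r ^ 2) := by
  rw [← exp_add, exp_le_exp]
  have hamgm : b * r ≤ b ^ 2 / δ + δ * r ^ 2 / 4 := by
    rw [div_add' _ _ _ hδ.ne', le_div_iff₀ hδ]
    nlinarith [sq_nonneg (b - δ * r / 2)]
  nlinarith [mul_le_mul_of_nonneg_left (sq_div_two_le_cosh_sub_one r) (hδ.le.trans hw),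
    mul_le_mul_of_nonneg_right hw (sq_nonneg r)]

lemma integral_exp_mul_sub_mul_cosh_le (b : ℝ) {δ w : ℝ} (hδ : 0 < δ) (hw : δ ≤ w) :
    Integrable (fun r => exp (b * r - w * (cosh r - 1))) ∧
      ∫ r, exp (b * r - w * (cosh r - 1)) ≤ exp (b ^ 2 / δ) * sqrt (4 * π / w) := by
  have hw0 : 0 < w := hδ.trans_le hw
  have hgauss : Integrable fun r : ℝ => exp (b ^ 2 / δ) * exp (-(w / 4) * r ^ 2) :=
    (integrable_exp_neg_mul_sq (by positivity)).const_mul _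
  have hbound := exp_mul_sub_mul_cosh_le b hδ hw
  have hint : Integrable fun r => exp (b * r - w * (cosh r - 1)) :=
    hgauss.mono' (by fun_prop) (.of_forall fun r => by
      rw [norm_of_nonneg (exp_pos _).le]; exact hbound r)
  refine ⟨hint, (integral_mono hint hgauss hbound).trans_eq ?_⟩
  rw [MeasureTheory.integral_const_mul, integral_gaussian, div_div_eq_mul_div, mul_comm π]

lemma heatKernel_nonneg (d : ℕ) {t : ℝ} (ht : 0 < t) (x : ℝ) : 0 ≤ heatKernel d t x := by
  unfold heatKernel; positivity

lemma heatKernel_mul_heatKernel (d : ℕ) {s u : ℝ} (hs : 0 < s) (hu : 0 < u) (x z : ℝ) :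
    heatKernel d s x * heatKernel d u z =
      heatKernel d (s + u) (x + z) *
        heatKernel d (s * u / (s + u)) ((x * u - z * s) / (s + u)) := by
  have hsu : 0 < s + u := by positivity
  have hprefactor : (2 * π * s) ^ (-(d : ℝ) / 2) * (2 * π * u) ^ (-(d : ℝ) / 2) =
      (2 * π * (s + u)) ^ (-(d : ℝ) / 2) * (2 * π * (s * u / (s + u))) ^ (-(d : ℝ) / 2) := by
    rw [← mul_rpow (by positivity) (by positivity), ← mul_rpow (by positivity) (by positivity)]
    congr 1
    field_simp
  have hexponent : -x ^ 2 / (2 * s) + -z ^ 2 / (2 * u) =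
      -(x + z) ^ 2 / (2 * (s + u)) +
        -((x * u - z * s) / (s + u)) ^ 2 / (2 * (s * u / (s + u))) := by
    field_simp
    ring
  unfold heatKernel
  calc _ = (2 * π * s) ^ (-(d : ℝ) / 2) * (2 * π * u) ^ (-(d : ℝ) / 2) *
        exp (-x ^ 2 / (2 * s) + -z ^ 2 / (2 * u)) := by rw [exp_add]; ring
    _ = _ := by rw [hprefactor, hexponent, exp_add]; ring

lemma rpow_mul_heatKernel_le (d : ℕ) {θ r r' : ℝ} (hθ : 0 < θ) (hr' : 0 < r')
    (hθr : θ * r ≤ r') (hr : r' ≤ r) (y : ℝ) :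
    θ ^ ((d : ℝ) / 2) * heatKernel d r' y ≤ heatKernel d r y := by
  have hr0 : 0 < r := hr'.trans_le hr
  have hθpow : θ ^ ((d : ℝ) / 2) = θ⁻¹ ^ (-(d : ℝ) / 2) := by
    rw [inv_rpow hθ.le, neg_div, rpow_neg hθ.le, inv_inv]
  have hprefactor :
      θ ^ ((d : ℝ) / 2) * (2 * π * r') ^ (-(d : ℝ) / 2) ≤ (2 * π * r) ^ (-(d : ℝ) / 2) := by
    rw [hθpow, ← mul_rpow (by positivity) (by positivity)]
    refine rpow_le_rpow_of_nonpos (by positivity) ?_ (by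
      have : (0 : ℝ) ≤ d := d.cast_nonneg
      linarith)
    rw [inv_mul_eq_div, le_div_iff₀ hθ]
    nlinarith [pi_pos]
  have hexp : exp (-y ^ 2 / (2 * r')) ≤ exp (-y ^ 2 / (2 * r)) := by
    rw [exp_le_exp, neg_div, neg_div, neg_le_neg_iff]
    exact div_le_div_of_nonneg_left (sq_nonneg y) (by positivity) (by linarith)
  unfold heatKernel
  rw [← mul_assoc]
  exact mul_le_mul hprefactor hexp (exp_pos _).le (by positivity)

lemma rpow_mul_heatKernel_mul_heatKernel_le (d : ℕ) {θ t s : ℝ} (hθ : 0 < θ) (ht : 0 < t)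
    (hθs : θ * t ≤ s) (hst : s < t) (x z : ℝ) :
    θ ^ ((d : ℝ) / 2) * (heatKernel d s x * heatKernel d (t - s) z) ≤
      heatKernel d t (x + z) * heatKernel d (t - s) ((x + z) / t * (t - s) - z) := by
  have hs : 0 < s := (mul_pos hθ ht).trans_le hθs
  have hu : 0 < t - s := sub_pos.2 hst
  have hbridge : (x * (t - s) - z * s) / t = (x + z) / t * (t - s) - z := by
    field_simp
    ring
  rw [heatKernel_mul_heatKernel d hs hu, add_sub_cancel, hbridge, mul_left_comm]
  refine mul_le_mul_of_nonneg_left (rpow_mul_heatKernel_le d hθ (by positivity) ?_ ?_ _)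
    (heatKernel_nonneg d ht _)
  · rw [le_div_iff₀ ht]
    nlinarith
  · rw [div_le_iff₀ ht]
    nlinarith

lemma heatKernel_drift_comp_exp (d : ℕ) {a z : ℝ} (ha : 0 < a) (hz : 0 < z) (r : ℝ) :
    z / a * exp r * heatKernel d (z / a * exp r) (a * (z / a * exp r) - z) =
      (2 * π) ^ (-(d : ℝ) / 2) * (z / a) ^ (1 - (d : ℝ) / 2) *
        exp ((1 - (d : ℝ) / 2) * r - a * z * (cosh r - 1)) := by
  have hexponent : -(a * (z / a * exp r) - z) ^ 2 / (2 * (z / a * exp r)) =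
      -(a * z * (cosh r - 1)) := by
    rw [cosh_eq, exp_neg]
    field_simp
    ring
  have hpow : exp r ^ (-(d : ℝ) / 2) = exp (-(d : ℝ) / 2 * r) := by rw [← exp_mul, mul_comm]
  have hcoef : (z / a) ^ (1 - (d : ℝ) / 2) = z / a * (z / a) ^ (-(d : ℝ) / 2) := by
    rw [sub_eq_add_neg, rpow_add (by positivity), rpow_one, neg_div]
  have hexp : exp ((1 - (d : ℝ) / 2) * r - a * z * (cosh r - 1)) =
      exp r * exp (-(d : ℝ) / 2 * r) * exp (-(a * z * (cosh r - 1))) := by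
    rw [← exp_add, ← exp_add]
    ring_nf
  unfold heatKernel
  rw [hexponent, mul_rpow (by positivity) (by positivity), mul_rpow (by positivity) (exp_pos r).le,
    hpow, hcoef, hexp]
  ring

lemma integral_heatKernel_drift_le (d : ℕ) {δ a z : ℝ} (hδ : 0 < δ) (ha : 0 < a) (hz : 0 < z)
    (hδaz : δ ≤ a * z) :
    IntegrableOn (fun u => heatKernel d u (a * u - z)) (Ioi 0) ∧
      ∫ u in Ioi 0, heatKernel d u (a * u - z) ≤ (2 * π) ^ (-(d : ℝ) / 2) *
        (z / a) ^ (1 - (d : ℝ) / 2) *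
          (exp ((1 - (d : ℝ) / 2) ^ 2 / δ) * sqrt (4 * π / (a * z))) := by
  set c := z / a with hc
  have hc0 : 0 < c := div_pos hz ha
  have himage : (fun r => c * exp r) '' univ = Ioi 0 := by
    rw [image_univ, range_comp' (c * ·) exp, range_exp, image_mul_left_Ioi hc0, mul_zero]
  have hderiv : ∀ r ∈ univ, HasDerivWithinAt (fun r => c * exp r) (c * exp r) univ r :=
    fun r _ => ((hasDerivAt_exp r).const_mul c).hasDerivWithinAt
  have hinj : InjOn (fun r => c * exp r) univ :=
    ((mul_right_injective₀ hc0.ne').comp exp_injective).injOn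
  have hjacobian : (fun r => |c * exp r| • heatKernel d (c * exp r) (a * (c * exp r) - z)) =
      fun r => (2 * π) ^ (-(d : ℝ) / 2) * c ^ (1 - (d : ℝ) / 2) *
        exp ((1 - (d : ℝ) / 2) * r - a * z * (cosh r - 1)) := by
    funext r
    rw [abs_of_pos (by positivity), smul_eq_mul, hc, heatKernel_drift_comp_exp d ha hz]
  obtain ⟨hint, hbound⟩ := integral_exp_mul_sub_mul_cosh_le (1 - (d : ℝ) / 2) hδ hδaz
  rw [← himage, integrableOn_image_iff_integrableOn_abs_deriv_smul MeasurableSet.univ hderiv hinj,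
    integral_image_eq_integral_abs_deriv_smul MeasurableSet.univ hderiv hinj, hjacobian,
    integrableOn_univ, Measure.restrict_univ, MeasureTheory.integral_const_mul]
  exact ⟨hint.const_mul _, mul_le_mul_of_nonneg_left hbound (by positivity)⟩

lemma intervalIntegral_mono_of_nonneg_of_le_Ioo {f g : ℝ → ℝ} {a b : ℝ} (hab : a ≤ b)
    (hg : IntervalIntegrable g volume a b) (hf : ∀ x ∈ Ioo a b, 0 ≤ f x)
    (hfg : ∀ x ∈ Ioo a b, f x ≤ g x) :
    ∫ x in a..b, f x ≤ ∫ x in a..b, g x := by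
  simp only [integral_of_le hab, integral_Ioc_eq_integral_Ioo]
  exact integral_mono_of_nonneg ((ae_restrict_mem measurableSet_Ioo).mono hf)
    (hg.1.mono_set Ioo_subset_Ioc_self) ((ae_restrict_mem measurableSet_Ioo).mono hfg)

lemma integral_comp_sub_left_le_integral_Ioi {G : ℝ → ℝ} (hG : IntegrableOn G (Ioi 0))
    (hG0 : ∀ u ∈ Ioi 0, 0 ≤ G u) {a b : ℝ} (hab : a ≤ b) :
    IntervalIntegrable (fun s => G (b - s)) volume a b ∧
      ∫ s in a..b, G (b - s) ≤ ∫ u in Ioi 0, G u := by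
  have hG' : IntervalIntegrable G volume 0 (b - a) :=
    (intervalIntegrable_iff_integrableOn_Ioc_of_le (sub_nonneg.2 hab)).2
      (hG.mono_set Ioc_subset_Ioi_self)
  refine ⟨by simpa using (hG'.comp_sub_left b).symm, ?_⟩
  rw [integral_comp_sub_left, sub_self, integral_of_le (sub_nonneg.2 hab)]
  exact setIntegral_mono_set hG ((ae_restrict_mem measurableSet_Ioi).mono hG0)
    Ioc_subset_Ioi_self.eventuallyLE

theorem stmt2_general (d : ℕ) (δ : ℝ) (hδ : 0 < δ) :
    ∃ C : ℝ, 0 < C ∧ ∀ x z t θ : ℝ, 0 < x → 0 < z → 0 < t → (x + z) * z > δ * t →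
      0 < θ → θ < 1 →
      θ ^ ((d : ℝ) / 2) * ∫ s in (θ * t)..t, heatKernel d s x * heatKernel d (t - s) z ≤
        C * heatKernel d t (x + z) * ((x + z) / (t * z)) ^ ((d : ℝ) / 2 - 1) *
          Real.sqrt (t / ((x + z) * z)) := by
  refine ⟨(2 * π) ^ (-(d : ℝ) / 2) * exp ((1 - (d : ℝ) / 2) ^ 2 / δ) * sqrt (4 * π),
    by positivity, fun x z t θ hx hz ht hδt hθ hθ1 => ?_⟩
  set a := (x + z) / t with ha_def
  have ha : 0 < a := by positivity
  have hδaz : δ ≤ a * z := by rw [div_mul_eq_mul_div, le_div_iff₀ ht]; linarith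
  have hθt : θ * t ≤ t := mul_le_of_le_one_left ht.le hθ1.le
  obtain ⟨hint, hbound⟩ := integral_heatKernel_drift_le d hδ ha hz hδaz
  obtain ⟨hint', hsub⟩ := integral_comp_sub_left_le_integral_Ioi hint
    (fun u hu => heatKernel_nonneg d hu _) hθt
  have hscale : (z / a) ^ (1 - (d : ℝ) / 2) = ((x + z) / (t * z)) ^ ((d : ℝ) / 2 - 1) := by
    rw [show z / a = ((x + z) / (t * z))⁻¹ by rw [ha_def]; field_simp, inv_rpow (by positivity),
      ← rpow_neg (by positivity), neg_sub]
  have hwidth : sqrt (4 * π / (a * z)) = sqrt (4 * π) * sqrt (t / ((x + z) * z)) := by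
    rw [← sqrt_mul (by positivity), ha_def]
    field_simp
  calc θ ^ ((d : ℝ) / 2) * ∫ s in (θ * t)..t, heatKernel d s x * heatKernel d (t - s) z
      = ∫ s in (θ * t)..t, θ ^ ((d : ℝ) / 2) * (heatKernel d s x * heatKernel d (t - s) z) :=
        (intervalIntegral.integral_const_mul _ _).symm
    _ ≤ ∫ s in (θ * t)..t, heatKernel d t (x + z) * heatKernel d (t - s) (a * (t - s) - z) :=
        intervalIntegral_mono_of_nonneg_of_le_Ioo hθt (hint'.const_mul _)
          (fun s hs => by
            have hs0 : 0 < s := (mul_pos hθ ht).trans hs.1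
            have := heatKernel_nonneg d hs0 x
            have := heatKernel_nonneg d (sub_pos.2 hs.2) z
            positivity)
          (fun s hs => rpow_mul_heatKernel_mul_heatKernel_le d hθ ht hs.1.le hs.2 x z)
    _ = heatKernel d t (x + z) * ∫ s in (θ * t)..t, heatKernel d (t - s) (a * (t - s) - z) :=
        intervalIntegral.integral_const_mul _ _
    _ ≤ heatKernel d t (x + z) * ((2 * π) ^ (-(d : ℝ) / 2) * (z / a) ^ (1 - (d : ℝ) / 2) *
          (exp ((1 - (d : ℝ) / 2) ^ 2 / δ) * sqrt (4 * π / (a * z)))) :=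
        mul_le_mul_of_nonneg_left (hsub.trans hbound) (heatKernel_nonneg d ht _)
    _ = _ := by rw [hscale, hwidth]; ring

theorem stmt2 (d : ℕ) (hd : 1 ≤ d) (δ : ℝ) (hδ : 0 < δ) :
    ∃ C : ℝ, 0 < C ∧ ∀ x z t θ : ℝ, 0 < x → 0 < z → 0 < t → (x + z) * z > δ * t →
      0 < θ → θ < 1 →
      θ ^ ((d : ℝ) / 2) * ∫ s in (θ * t)..t, heatKernel d s x * heatKernel d (t - s) z ≤
        C * heatKernel d t (x + z) * ((x + z) / (t * z)) ^ ((d : ℝ) / 2 - 1) *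
          Real.sqrt (t / ((x + z) * z)) :=
  stmt2_general d δ hδ
end

section
/- Let d ≥ 1 and p_t^{(d)}(x) = (2πt)^{−d/2} e^{−x²/(2t)}. For any δ > 0 there is a constant C_δ such that if (x+z)z > δt > 0 and 0 < z ≤ x, then ∫₀^t p_s^{(d)}(x) p_{t−s}^{(d)}(z) ds ≤ C_δ · p_t^{(d)}(x+z) · ((x+z)/(tz))^{d/2−1} · √(t/((x+z)z)). -/
/-!
Substituting `s = t (1 - v)` and completing the square, `p_s(x) p_{t-s}(z)` becomes
`(2πt)^{-d} e^{-(x+z)²/2t}` times the bridge profile `(v(1-v))^{-d/2} e^{-E(v)}`,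
`E(v) = κ (v - ρ)² / (2v(1-v))`, where `κ = (x+z)²/t`, `ρ = z/(x+z) ≤ 1/2` and the
hypothesis reads `κρ > δ`. Write `e^{-E} = e^{-E/2} e^{-E/4} e^{-E/4}`. Because
`w^{-α} e^{-q/w} ≤ (α/e)^α q^{-α}`, the first factor absorbs the singularity `v^{-d/2}` at the
price `O(ρ^{-d/2})` and the second absorbs `(1-v)^{-d/2}` at the price `O(1)`. The last factor
is at most a Gaussian of width `√(ρ/κ)` around `ρ` (where `v ≤ 2ρ`) plus `e^{-κv/32}` (where
`v ≥ 2ρ`), so the profile integrates to `O(ρ^{-d/2} (√(ρ/κ) + 1/κ)) = O(ρ^{1-d/2} / √(κρ))`,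
which is the claimed bound.
-/

open Real intervalIntegral

open MeasureTheory Set

lemma rpow_mul_exp_neg_le {α y : ℝ} (hα : 0 < α) (hy : 0 ≤ y) :
    y ^ α * exp (-y) ≤ (α / exp 1) ^ α := by
  have key : (y / α * exp (-(y / α))) ^ α ≤ (exp (-1)) ^ α :=
    rpow_le_rpow (by positivity) (mul_exp_neg_le_exp_neg_one _) hα.le
  have hαpow : 0 < α ^ α := by positivity
  rw [mul_rpow (by positivity) (exp_pos _).le, ← exp_mul, ← exp_mul, div_rpow hy hα.le,
    neg_mul, div_mul_cancel₀ _ hα.ne', div_mul_eq_mul_div, div_le_iff₀ hαpow] at key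
  rwa [div_rpow hα.le (exp_pos _).le, ← exp_mul, one_mul, div_eq_mul_inv, ← exp_neg,
    mul_comm (α ^ α), ← neg_one_mul α]

lemma rpow_neg_mul_exp_neg_div_le {α q w : ℝ} (hα : 0 < α) (hq : 0 < q) (hw : 0 < w) :
    w ^ (-α) * exp (-(q / w)) ≤ (α / exp 1) ^ α * q ^ (-α) := by
  have hw' : w ^ (-α) = (q / w) ^ α * q ^ (-α) := by
    rw [div_rpow hq.le hw.le, rpow_neg hq.le, rpow_neg hw.le]
    field_simp
  rw [hw', mul_right_comm]
  gcongr
  exact rpow_mul_exp_neg_le hα (by positivity)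

lemma rpow_neg_mul_exp_neg_sq_div_le {α q v ρ μ : ℝ} (hα : 0 < α) (hv : 0 < v) (hρ : 0 < ρ)
    (hμ : 0 < μ) (hμq : μ ≤ q * ρ) :
    v ^ (-α) * exp (-(q * (v - ρ) ^ 2 / v)) ≤
      (2 ^ α + (α / exp 1) ^ α * (4 / μ) ^ α) * ρ ^ (-α) := by
  have hq : 0 < q := pos_of_mul_pos_left (hμ.trans_le hμq) hρ.le
  have hα' : -α ≤ 0 := neg_nonpos.mpr hα.le
  rcases le_total v (ρ / 2) with hvρ | hρv
  · have hexp : q * (ρ ^ 2 / 4) / v ≤ q * (v - ρ) ^ 2 / v := by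
      gcongr; nlinarith
    have hpow : (q * (ρ ^ 2 / 4)) ^ (-α) ≤ (4 / μ) ^ α * ρ ^ (-α) := by
      rw [show q * (ρ ^ 2 / 4) = (q * ρ / 4) * ρ by ring, mul_rpow (by positivity) hρ.le,
        ← inv_div μ 4, inv_rpow (by positivity), ← rpow_neg (by positivity)]
      exact mul_le_mul_of_nonneg_right
        (rpow_le_rpow_of_nonpos (by positivity) (by linarith) hα') (by positivity)
    calc v ^ (-α) * exp (-(q * (v - ρ) ^ 2 / v))
        ≤ v ^ (-α) * exp (-(q * (ρ ^ 2 / 4) / v)) := by gcongr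
      _ ≤ (α / exp 1) ^ α * (q * (ρ ^ 2 / 4)) ^ (-α) :=
        rpow_neg_mul_exp_neg_div_le hα (by positivity) hv
      _ ≤ (α / exp 1) ^ α * ((4 / μ) ^ α * ρ ^ (-α)) := by gcongr
      _ ≤ _ := by
        have : 0 ≤ 2 ^ α * ρ ^ (-α) := by positivity
        linarith
  · calc v ^ (-α) * exp (-(q * (v - ρ) ^ 2 / v))
        ≤ (ρ / 2) ^ (-α) * 1 :=
          mul_le_mul (rpow_le_rpow_of_nonpos (by positivity) hρv hα')
            (exp_le_one_iff.mpr (neg_nonpos.mpr (by positivity))) (exp_pos _).le (by positivity)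
      _ = 2 ^ α * ρ ^ (-α) := by
        rw [mul_one, div_eq_mul_inv, mul_rpow hρ.le (by norm_num), inv_rpow (by norm_num),
          ← rpow_neg (by norm_num), neg_neg, mul_comm]
      _ ≤ _ := by
        gcongr
        have : 0 ≤ (α / exp 1) ^ α * (4 / μ) ^ α := by positivity
        linarith

lemma intervalIntegral_exp_neg_mul_sq_sub_le {a b c r : ℝ} (hab : a ≤ b) (hc : 0 < c) :
    ∫ v in a..b, exp (-c * (v - r) ^ 2) ≤ √(π / c) := by
  have hint : Integrable (fun v ↦ exp (-c * (v - r) ^ 2)) :=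
    (integrable_exp_neg_mul_sq hc).comp_sub_right r
  calc ∫ v in a..b, exp (-c * (v - r) ^ 2)
      ≤ ∫ v, exp (-c * (v - r) ^ 2) := by
        rw [integral_of_le hab]
        exact setIntegral_le_integral hint (.of_forall fun v ↦ (exp_pos _).le)
    _ = √(π / c) := by
        rw [integral_sub_right_eq_self (fun v ↦ exp (-c * v ^ 2)), integral_gaussian]

lemma intervalIntegral_exp_neg_mul_le {b c : ℝ} (hc : 0 < c) :
    ∫ v in (0 : ℝ)..b, exp (-c * v) ≤ 1 / c := by
  rw [integral_comp_mul_left (fun v ↦ exp v) (neg_ne_zero.mpr hc.ne'), integral_exp, smul_eq_mul,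
    mul_zero, exp_zero, inv_neg, neg_mul, ← mul_neg, neg_sub, one_div]
  exact mul_le_of_le_one_right (inv_pos.mpr hc).le (by linarith [exp_pos (-c * b)])

lemma sqrt_pi_div_add_one_div_le {δ κ ρ : ℝ} (hδ : 0 < δ) (hρ : 0 < ρ) (hκρ : δ ≤ κ * ρ) :
    √(π / (κ / (16 * ρ))) + 1 / (κ / 32) ≤ (4 * √π + 32 / √δ) * ρ / √(κ * ρ) := by
  have hκ : 0 < κ := pos_of_mul_pos_left (hδ.trans_le hκρ) hρ.le
  set s := √(κ * ρ)
  have hs : 0 < s := sqrt_pos.mpr (by positivity)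
  have hss : s * s = κ * ρ := mul_self_sqrt (by positivity)
  have hδs : √δ ≤ s := sqrt_le_sqrt hκρ
  have hgauss : √(π / (κ / (16 * ρ))) = 4 * √π * ρ / s := by
    rw [show π / (κ / (16 * ρ)) = (4 * ρ) ^ 2 * (π / (κ * ρ)) by field_simp; ring,
      sqrt_mul (by positivity), sqrt_sq (by positivity), sqrt_div' _ (by positivity)]
    ring
  have hexp : 1 / (κ / 32) ≤ 32 / √δ * ρ / s :=
    calc 1 / (κ / 32) = 32 * ρ / (s * s) := by rw [hss]; field_simp
      _ ≤ 32 * ρ / (√δ * s) := by gcongr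
      _ = 32 / √δ * ρ / s := by ring
  rw [hgauss]
  linarith [show (4 * √π + 32 / √δ) * ρ / s = 4 * √π * ρ / s + 32 / √δ * ρ / s by ring]

noncomputable def bridgeExponent (κ ρ v : ℝ) : ℝ :=
  κ * (v - ρ) ^ 2 / (2 * (v * (1 - v)))

noncomputable def bridgeProfile (α κ ρ v : ℝ) : ℝ :=
  (v * (1 - v)) ^ (-α) * exp (-bridgeExponent κ ρ v)

section bridge

variable {α δ κ ρ v : ℝ}

lemma rpow_neg_mul_exp_neg_bridgeExponent_le_left (hα : 0 < α) (hδ : 0 < δ) (hρ : 0 < ρ)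
    (hκρ : δ ≤ κ * ρ) (hv : v ∈ Ioo 0 1) :
    v ^ (-α) * exp (-(bridgeExponent κ ρ v / 2)) ≤
      (2 ^ α + (α / exp 1) ^ α * (4 / (δ / 8)) ^ α) * ρ ^ (-α) := by
  obtain ⟨hv0, hv1⟩ := hv
  have hκ : 0 < κ := pos_of_mul_pos_left (hδ.trans_le hκρ) hρ.le
  have hE : κ / 4 * (v - ρ) ^ 2 / v ≤ bridgeExponent κ ρ v / 2 := by
    rw [bridgeExponent, div_div, div_le_div_iff₀ (by positivity) (by nlinarith)]
    nlinarith [mul_nonneg (by positivity : 0 ≤ κ * (v - ρ) ^ 2) hv0.le]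
  calc v ^ (-α) * exp (-(bridgeExponent κ ρ v / 2))
      ≤ v ^ (-α) * exp (-(κ / 4 * (v - ρ) ^ 2 / v)) := by gcongr
    _ ≤ _ := rpow_neg_mul_exp_neg_sq_div_le hα hv0 hρ (by positivity) (by linarith)

lemma rpow_neg_mul_exp_neg_bridgeExponent_le_right (hα : 0 < α) (hδ : 0 < δ) (hρ : 0 < ρ)
    (hρ2 : ρ ≤ 1 / 2) (hκρ : δ ≤ κ * ρ) (hv : v ∈ Ioo 0 1) :
    (1 - v) ^ (-α) * exp (-(bridgeExponent κ ρ v / 4)) ≤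
      (2 ^ α + (α / exp 1) ^ α * (4 / (δ / 8)) ^ α) * 2 ^ α := by
  obtain ⟨hv0, hv1⟩ := hv
  have hκ : 0 < κ := pos_of_mul_pos_left (hδ.trans_le hκρ) hρ.le
  have hE : κ / 8 * ((1 - v) - (1 - ρ)) ^ 2 / (1 - v) ≤ bridgeExponent κ ρ v / 4 := by
    rw [bridgeExponent, div_div, div_le_div_iff₀ (by linarith) (by nlinarith)]
    nlinarith [mul_nonneg (by positivity : 0 ≤ κ * (v - ρ) ^ 2) (sub_nonneg.2 hv1.le)]
  have hρ' : (1 - ρ) ^ (-α) ≤ 2 ^ α := by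
    rw [← inv_inv (2 : ℝ), inv_rpow (by norm_num), ← rpow_neg (by norm_num)]
    exact rpow_le_rpow_of_nonpos (by norm_num) (by linarith) (neg_nonpos.mpr hα.le)
  calc (1 - v) ^ (-α) * exp (-(bridgeExponent κ ρ v / 4))
      ≤ (1 - v) ^ (-α) * exp (-(κ / 8 * ((1 - v) - (1 - ρ)) ^ 2 / (1 - v))) := by gcongr
    _ ≤ (2 ^ α + (α / exp 1) ^ α * (4 / (δ / 8)) ^ α) * (1 - ρ) ^ (-α) :=
      rpow_neg_mul_exp_neg_sq_div_le hα (by linarith) (by linarith) (by positivity) (by nlinarith)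
    _ ≤ _ := by gcongr

lemma exp_neg_bridgeExponent_le (hκ : 0 < κ) (hρ : 0 < ρ) (hv : v ∈ Ioo 0 1) :
    exp (-(bridgeExponent κ ρ v / 4)) ≤
      exp (-(κ / (16 * ρ)) * (v - ρ) ^ 2) + exp (-(κ / 32) * v) := by
  obtain ⟨hv0, hv1⟩ := hv
  have hκsq : 0 ≤ κ * (v - ρ) ^ 2 := by positivity
  rcases le_total v (2 * ρ) with h | h
  · have hE : κ / (16 * ρ) * (v - ρ) ^ 2 ≤ bridgeExponent κ ρ v / 4 := by
      rw [bridgeExponent, div_div, div_mul_eq_mul_div,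
        div_le_div_iff₀ (by positivity) (by nlinarith)]
      nlinarith [mul_nonneg hκsq hv0.le, mul_nonneg hκsq (sub_nonneg.2 h)]
    calc exp (-(bridgeExponent κ ρ v / 4)) ≤ exp (-(κ / (16 * ρ)) * (v - ρ) ^ 2) :=
          exp_le_exp.mpr (by rw [neg_mul]; linarith)
      _ ≤ _ := le_add_of_nonneg_right (exp_pos _).le
  · have hE : κ / 32 * v ≤ bridgeExponent κ ρ v / 4 := by
      rw [bridgeExponent, div_div, le_div_iff₀ (by nlinarith)]
      have h1 : v ^ 2 ≤ 4 * (v - ρ) ^ 2 := by nlinarith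
      have h2 : v * (1 - v) ≤ v := by nlinarith
      nlinarith [mul_le_mul_of_nonneg_left h1 hκ.le,
        mul_le_mul_of_nonneg_left h2 (by positivity : (0:ℝ) ≤ κ * v)]
    calc exp (-(bridgeExponent κ ρ v / 4)) ≤ exp (-(κ / 32) * v) :=
          exp_le_exp.mpr (by rw [neg_mul]; linarith)
      _ ≤ _ := le_add_of_nonneg_left (exp_pos _).le

lemma exists_bridgeProfile_le (hα : 0 < α) (hδ : 0 < δ) :
    ∃ C > 0, ∀ κ ρ v : ℝ, 0 < ρ → ρ ≤ 1 / 2 → δ ≤ κ * ρ → v ∈ Ioo 0 1 →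
      bridgeProfile α κ ρ v ≤
        C * ρ ^ (-α) * (exp (-(κ / (16 * ρ)) * (v - ρ) ^ 2) + exp (-(κ / 32) * v)) := by
  set M := 2 ^ α + (α / exp 1) ^ α * (4 / (δ / 8)) ^ α
  refine ⟨M * (M * 2 ^ α), by positivity, fun κ ρ v hρ hρ2 hκρ hv => ?_⟩
  have hκ : 0 < κ := pos_of_mul_pos_left (hδ.trans_le hκρ) hρ.le
  set E := bridgeExponent κ ρ v
  have hsplit : bridgeProfile α κ ρ v =
      (v ^ (-α) * exp (-(E / 2))) * ((1 - v) ^ (-α) * exp (-(E / 4))) * exp (-(E / 4)) := by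
    have hexp : exp (-E) = exp (-(E / 2)) * exp (-(E / 4)) * exp (-(E / 4)) := by
      rw [← exp_add, ← exp_add]; ring_nf
    rw [bridgeProfile, mul_rpow hv.1.le (by linarith [hv.2]), hexp]
    ring
  calc bridgeProfile α κ ρ v
      ≤ (M * ρ ^ (-α)) * (M * 2 ^ α) *
          (exp (-(κ / (16 * ρ)) * (v - ρ) ^ 2) + exp (-(κ / 32) * v)) := by
        have hv1 : 0 < 1 - v := by linarith [hv.2]
        rw [hsplit]
        refine mul_le_mul (mul_le_mul ?_ ?_ (by positivity) (by positivity))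
          (exp_neg_bridgeExponent_le hκ hρ hv) (by positivity) (by positivity)
        · exact rpow_neg_mul_exp_neg_bridgeExponent_le_left hα hδ hρ hκρ hv
        · exact rpow_neg_mul_exp_neg_bridgeExponent_le_right hα hδ hρ hρ2 hκρ hv
    _ = _ := by ring

lemma exists_integral_bridgeProfile_le (hα : 0 < α) (hδ : 0 < δ) :
    ∃ C > 0, ∀ κ ρ : ℝ, 0 < ρ → ρ ≤ 1 / 2 → δ ≤ κ * ρ →
      ∫ v in (0 : ℝ)..1, bridgeProfile α κ ρ v ≤ C * ρ ^ (1 - α) / √(κ * ρ) := by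
  obtain ⟨C, hC, hle⟩ := exists_bridgeProfile_le hα hδ
  refine ⟨C * (4 * √π + 32 / √δ), by positivity, fun κ ρ hρ hρ2 hκρ => ?_⟩
  have hκ : 0 < κ := pos_of_mul_pos_left (hδ.trans_le hκρ) hρ.le
  set bound := fun v ↦ C * ρ ^ (-α) * (exp (-(κ / (16 * ρ)) * (v - ρ) ^ 2) + exp (-(κ / 32) * v))
  have hbound : IntervalIntegrable bound volume 0 1 := by
    apply Continuous.intervalIntegrable; fun_prop
  have hint : IntervalIntegrable (bridgeProfile α κ ρ) volume 0 1 := by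
    refine hbound.mono_fun' (by unfold bridgeProfile bridgeExponent; fun_prop) ?_
    rw [uIoc_of_le zero_le_one, ← Measure.restrict_congr_set Ioo_ae_eq_Ioc]
    filter_upwards [ae_restrict_mem measurableSet_Ioo] with v hv
    have : 0 < v * (1 - v) := mul_pos hv.1 (by linarith [hv.2])
    rw [Real.norm_of_nonneg (by unfold bridgeProfile; positivity)]
    exact hle κ ρ v hρ hρ2 hκρ hv
  calc ∫ v in (0 : ℝ)..1, bridgeProfile α κ ρ v
      ≤ ∫ v in (0 : ℝ)..1, bound v :=
        integral_mono_on_of_le_Ioo zero_le_one hint hbound fun v hv ↦ hle κ ρ v hρ hρ2 hκρ hv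
    _ = C * ρ ^ (-α) * ((∫ v in (0 : ℝ)..1, exp (-(κ / (16 * ρ)) * (v - ρ) ^ 2)) +
          ∫ v in (0 : ℝ)..1, exp (-(κ / 32) * v)) := by
        rw [intervalIntegral.integral_const_mul, intervalIntegral.integral_add] <;>
          apply Continuous.intervalIntegrable <;> fun_prop
    _ ≤ C * ρ ^ (-α) * (√(π / (κ / (16 * ρ))) + 1 / (κ / 32)) := by
        gcongr
        · exact intervalIntegral_exp_neg_mul_sq_sub_le zero_le_one (by positivity)
        · exact intervalIntegral_exp_neg_mul_le (by positivity)
    _ ≤ C * ρ ^ (-α) * ((4 * √π + 32 / √δ) * ρ / √(κ * ρ)) := by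
        gcongr
        exact sqrt_pi_div_add_one_div_le hδ hρ hκρ
    _ = _ := by rw [← neg_add_eq_sub, rpow_add_one hρ.ne']; ring

end bridge

lemma heatKernel_mul_heatKernel_eq (d : ℕ) {t x z v : ℝ} (ht : 0 < t) (ha : 0 < x + z)
    (hv : v ∈ Ioo 0 1) :
    heatKernel d (t - t * v) x * heatKernel d (t - (t - t * v)) z =
      ((2 * π * t) ^ (-((d : ℝ) / 2))) ^ 2 * exp (-(x + z) ^ 2 / (2 * t)) *
        bridgeProfile ((d : ℝ) / 2) ((x + z) ^ 2 / t) (z / (x + z)) v := by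
  obtain ⟨hv0, hv1⟩ := hv
  have h1v : 0 < 1 - v := by linarith
  set α := (d : ℝ) / 2
  have hpow (w : ℝ) (hw : 0 ≤ w) : (2 * π * (t * w)) ^ (-α) = (2 * π * t) ^ (-α) * w ^ (-α) := by
    rw [← mul_assoc, mul_rpow (by positivity) hw]
  have hexp : exp (-x ^ 2 / (2 * (t * (1 - v)))) * exp (-z ^ 2 / (2 * (t * v))) =
      exp (-(x + z) ^ 2 / (2 * t)) * exp (-bridgeExponent ((x + z) ^ 2 / t) (z / (x + z)) v) := by
    rw [← exp_add, ← exp_add, bridgeExponent]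
    congr 1
    field_simp
    ring
  rw [show t - (t - t * v) = t * v by ring, show t - t * v = t * (1 - v) by ring, heatKernel,
    heatKernel, neg_div, hpow _ h1v.le, hpow _ hv0.le, bridgeProfile, mul_rpow hv0.le h1v.le]
  linear_combination ((2 * π * t) ^ (-α)) ^ 2 * v ^ (-α) * (1 - v) ^ (-α) * hexp

lemma integral_heatKernel_mul_heatKernel_eq (d : ℕ) {t x z : ℝ} (ht : 0 < t) (ha : 0 < x + z) :
    ∫ s in (0 : ℝ)..t, heatKernel d s x * heatKernel d (t - s) z =
      t * ((2 * π * t) ^ (-((d : ℝ) / 2))) ^ 2 * exp (-(x + z) ^ 2 / (2 * t)) *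
        ∫ v in (0 : ℝ)..1, bridgeProfile ((d : ℝ) / 2) ((x + z) ^ 2 / t) (z / (x + z)) v := by
  have hsub := integral_comp_sub_mul (fun s ↦ heatKernel d s x * heatKernel d (t - s) z)
    (a := 0) (b := 1) ht.ne' t
  rw [mul_one, sub_self, mul_zero, sub_zero, smul_eq_mul] at hsub
  calc ∫ s in (0 : ℝ)..t, heatKernel d s x * heatKernel d (t - s) z
      = t * ∫ v in (0 : ℝ)..1, heatKernel d (t - t * v) x * heatKernel d (t - (t - t * v)) z := by
        rw [hsub, ← mul_assoc, mul_inv_cancel₀ ht.ne', one_mul]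
    _ = t * ∫ v in (0 : ℝ)..1, ((2 * π * t) ^ (-((d : ℝ) / 2))) ^ 2 *
          exp (-(x + z) ^ 2 / (2 * t)) *
          bridgeProfile ((d : ℝ) / 2) ((x + z) ^ 2 / t) (z / (x + z)) v := by
        simp only [integral_of_le zero_le_one, integral_Ioc_eq_integral_Ioo]
        rw [setIntegral_congr_fun measurableSet_Ioo
          fun v hv ↦ heatKernel_mul_heatKernel_eq d ht ha hv]
    _ = _ := by rw [intervalIntegral.integral_const_mul]; ring

lemma mul_rpow_neg_mul_rpow_div_sqrt_eq {α a z t : ℝ} (ha : 0 < a) (hz : 0 < z) (ht : 0 < t) :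
    t * (2 * π * t) ^ (-α) * (z / a) ^ (1 - α) / √(a ^ 2 / t * (z / a)) =
      (2 * π) ^ (-α) * (a / (t * z)) ^ (α - 1) * √(t / (a * z)) := by
  have h1 : a / (t * z) = (t * (z / a))⁻¹ := by field_simp
  have h2 : t / (a * z) = (a ^ 2 / t * (z / a))⁻¹ := by field_simp
  have h3 : t * t ^ (-α) = t ^ (1 - α) := by
    rw [sub_eq_add_neg, rpow_add ht, rpow_one]
  rw [h1, h2, inv_rpow (by positivity), ← rpow_neg (by positivity), neg_sub, sqrt_inv,
    mul_rpow ht.le (by positivity), mul_rpow (by positivity) ht.le, ← h3]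
  ring

theorem stmt3 (d : ℕ) (hd : 1 ≤ d) (δ : ℝ) (hδ : 0 < δ) :
    ∃ C : ℝ, 0 < C ∧ ∀ x z t : ℝ, 0 < z → z ≤ x → 0 < t → (x + z) * z > δ * t →
      (∫ s in (0:ℝ)..t, heatKernel d s x * heatKernel d (t - s) z) ≤
        C * heatKernel d t (x + z) * ((x + z) / (t * z)) ^ ((d : ℝ) / 2 - 1) *
          Real.sqrt (t / ((x + z) * z)) := by
  have hα : 0 < (d : ℝ) / 2 := div_pos (Nat.cast_pos.mpr hd) two_pos
  obtain ⟨C, hC, hJ⟩ := exists_integral_bridgeProfile_le hα hδ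
  refine ⟨(2 * π) ^ (-((d : ℝ) / 2)) * C, by positivity, fun x z t hz hzx ht hδt ↦ ?_⟩
  have ha : 0 < x + z := by linarith
  have hρ2 : z / (x + z) ≤ 1 / 2 := by rw [div_le_iff₀ ha]; linarith
  have hκρ : δ ≤ (x + z) ^ 2 / t * (z / (x + z)) := by
    rw [show (x + z) ^ 2 / t * (z / (x + z)) = (x + z) * z / t by field_simp, le_div_iff₀ ht]
    exact hδt.le
  rw [integral_heatKernel_mul_heatKernel_eq d ht ha]
  calc _ ≤ t * ((2 * π * t) ^ (-((d : ℝ) / 2))) ^ 2 * exp (-(x + z) ^ 2 / (2 * t)) *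
        (C * (z / (x + z)) ^ (1 - (d : ℝ) / 2) / √((x + z) ^ 2 / t * (z / (x + z)))) := by
        gcongr
        exact hJ _ _ (by positivity) hρ2 hκρ
    _ = C * ((2 * π * t) ^ (-((d : ℝ) / 2)) * exp (-(x + z) ^ 2 / (2 * t))) *
        (t * (2 * π * t) ^ (-((d : ℝ) / 2)) * (z / (x + z)) ^ (1 - (d : ℝ) / 2) /
          √((x + z) ^ 2 / t * (z / (x + z)))) := by ring
    _ = _ := by
        rw [mul_rpow_neg_mul_rpow_div_sqrt_eq ha hz ht, heatKernel, neg_div 2 (d : ℝ)]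
        ring
end

section
/- Let q(x,t) = (x/t)(2πt)^{−1/2} e^{−x²/(2t)} denote the density of the first passage time of a standard Brownian motion from 0 to x > 0. There is a universal constant c > 0 such that for all 0 < b < ℓ with ρ₁ := b/ℓ ≤ 1/2 and all t > 0, ∫_{ρ₁t/2}^{ρ₁t} q(ℓ−b, t−s) q(b, s) ds ≥ c·min(1, √(bℓ/t)) · q(ℓ, t). -/
open Real intervalIntegral

/-- First passage time density of standard Brownian motion from 0 to level x:
`q(x,t) = (x/t) p_t^{(1)}(x)`. -/
noncomputable def fpd (x t : ℝ) : ℝ := (x / t) * heatKernel 1 t x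

/-!
Completing the square in the exponent,
  q(ℓ-b, t-s) q(b, s) = q(ℓ, t) · (ℓ-b) b t / ((t-s) s ℓ) · √(2πt) / (√(2π(t-s)) √(2πs))
                        · exp(-(ℓs - bt)² / (2ts(t-s))),
so the Gaussian factor equals 1 at the saddle point s = ρ₁t and stays ≥ e^{-1/2} on the
window [ρ₁t(1 - m/2), ρ₁t] as soon as m ≤ 1 and m²bℓ ≤ t. On [ρ₁t/2, ρ₁t] the algebraic
prefactor is at least (ℓ/2t) / √(2πρ₁t). Taking m = min(1, √(t/(bℓ))), the window length ρ₁tm/2 times this lower bound is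
e^{-1/2}/(4√(2π)) · min(1, √(bℓ/t)) · q(ℓ, t).
-/

open MeasureTheory Set

lemma mul_le_integral_of_le_on_Icc {f : ℝ → ℝ} {a b a' b' K : ℝ} (haa' : a ≤ a') (ha'b' : a' ≤ b')
    (hb'b : b' ≤ b) (hf : IntervalIntegrable f volume a b) (hf0 : ∀ x ∈ Icc a b, 0 ≤ f x)
    (hK : ∀ x ∈ Icc a' b', K ≤ f x) : (b' - a') * K ≤ ∫ x in a..b, f x := by
  have hf' : IntervalIntegrable f volume a' b' :=
    hf.mono_set (by rw [uIcc_of_le ha'b', uIcc_of_le (by linarith)]; exact Icc_subset_Icc haa' hb'b)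
  calc (b' - a') * K = ∫ _ in a'..b', K := by rw [intervalIntegral.integral_const, smul_eq_mul]
    _ ≤ ∫ x in a'..b', f x := integral_mono_on ha'b' intervalIntegrable_const hf' hK
    _ ≤ ∫ x in a..b, f x := integral_mono_interval haa' ha'b' hb'b
        ((ae_restrict_mem measurableSet_Ioc).mono fun x hx => hf0 x (Ioc_subset_Icc_self hx)) hf

lemma heatKernel_one_eq {t : ℝ} (ht : 0 ≤ t) (x : ℝ) :
    heatKernel 1 t x = (√(2 * π * t))⁻¹ * exp (-x ^ 2 / (2 * t)) := by
  rw [heatKernel, sqrt_eq_rpow, ← rpow_neg (by positivity)]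
  norm_num

lemma fpd_nonneg {x t : ℝ} (hx : 0 ≤ x) (ht : 0 ≤ t) : 0 ≤ fpd x t := by
  rw [fpd, heatKernel_one_eq ht]
  positivity

lemma continuousAt_fpd (x : ℝ) {t : ℝ} (ht : t ≠ 0) : ContinuousAt (fpd x) t := by
  unfold fpd heatKernel
  fun_prop (disch := simp [ht, pi_ne_zero])

lemma neg_sq_div_add_neg_sq_div {x y s t : ℝ} (hs : s ≠ 0) (hts : t - s ≠ 0) (ht : t ≠ 0) :
    -(x - y) ^ 2 / (2 * (t - s)) + -y ^ 2 / (2 * s) =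
      -x ^ 2 / (2 * t) + -((x * s - y * t) ^ 2 / (2 * (t * s * (t - s)))) := by
  field_simp
  ring

lemma fpd_sub_mul_fpd {x y s t : ℝ} (hx : x ≠ 0) (hs : 0 < s) (hst : s < t) :
    fpd (x - y) (t - s) * fpd y s =
      fpd x t * ((x - y) / x * (t / (t - s)) * (y / s)) *
        (√(2 * π * t) / (√(2 * π * (t - s)) * √(2 * π * s))) *
        exp (-((x * s - y * t) ^ 2 / (2 * (t * s * (t - s))))) := by
  have ht : 0 < t := hs.trans hst
  have hts : 0 < t - s := sub_pos.mpr hst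
  have hexp : exp (-(x - y) ^ 2 / (2 * (t - s))) * exp (-y ^ 2 / (2 * s)) =
      exp (-x ^ 2 / (2 * t)) * exp (-((x * s - y * t) ^ 2 / (2 * (t * s * (t - s))))) := by
    rw [← exp_add, ← exp_add, neg_sq_div_add_neg_sq_div hs.ne' hts.ne' ht.ne']
  simp only [fpd, heatKernel_one_eq ht.le, heatKernel_one_eq hts.le, heatKernel_one_eq hs.le]
  calc _ = (x - y) / (t - s) * (y / s) * ((√(2 * π * (t - s)))⁻¹ * (√(2 * π * s))⁻¹) *
        (exp (-(x - y) ^ 2 / (2 * (t - s))) * exp (-y ^ 2 / (2 * s))) := by ring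
    _ = _ := by
      rw [hexp]
      field_simp

lemma fpd_sub_mul_fpd_ge {b ℓ t s : ℝ} (hb : 0 < b) (hℓ : 0 < ℓ) (hρ : b / ℓ ≤ 1 / 2)
    (ht : 0 < t) (hs : s ∈ Icc (b / ℓ * t / 2) (b / ℓ * t))
    (hexcess : (ℓ * s - b * t) ^ 2 ≤ t * s * (t - s)) :
    fpd ℓ t * (ℓ / (2 * t)) * (√(2 * π * (b / ℓ * t)))⁻¹ * exp (-1 / 2) ≤
      fpd (ℓ - b) (t - s) * fpd b s := by
  have hs0 : 0 < s := lt_of_lt_of_le (by positivity) hs.1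
  have hst : s ≤ 1 / 2 * t := hs.2.trans (mul_le_mul_of_nonneg_right hρ ht.le)
  have hts : 0 < t - s := by linarith
  rw [div_le_iff₀ hℓ] at hρ
  have hℓb : 0 < ℓ - b := by linarith
  have := fpd_nonneg hℓ.le ht.le
  rw [fpd_sub_mul_fpd hℓ.ne' hs0 (by linarith)]
  gcongr ?_ * ?_ * ?_ * ?_
  · calc ℓ / (2 * t) = 1 / 2 * 1 * (ℓ / t) := by ring
      _ ≤ (ℓ - b) / ℓ * (t / (t - s)) * (b / s) := by
        gcongr ?_ * ?_ * ?_
        · rw [le_div_iff₀ hℓ]; linarith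
        · rw [one_le_div hts]; linarith
        · rw [div_le_div_iff₀ ht hs0, ← le_div_iff₀' hℓ, ← div_mul_eq_mul_div]
          exact hs.2
  · calc (√(2 * π * (b / ℓ * t)))⁻¹ ≤ 1 * (√(2 * π * s))⁻¹ := by
          rw [one_mul]; gcongr; exact hs.2
      _ ≤ √(2 * π * t) / √(2 * π * (t - s)) * (√(2 * π * s))⁻¹ := by
          gcongr
          rw [one_le_div (by positivity)]
          gcongr
          linarith
      _ = √(2 * π * t) / (√(2 * π * (t - s)) * √(2 * π * s)) := by ring
  · have : (ℓ * s - b * t) ^ 2 / (2 * (t * s * (t - s))) ≤ 1 / 2 := by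
      rw [div_le_iff₀ (by positivity)]
      linarith
    exact exp_le_exp.mpr (by linarith)

lemma sq_mul_sub_le_of_mem_window {b ℓ t s m : ℝ} (hb : 0 < b) (hℓ : 0 < ℓ) (hρ : b / ℓ ≤ 1 / 2)
    (ht : 0 < t) (hm1 : m ≤ 1) (hm : m ^ 2 * (b * ℓ) ≤ t)
    (hs : s ∈ Icc (b / ℓ * t * (1 - m / 2)) (b / ℓ * t)) :
    (ℓ * s - b * t) ^ 2 ≤ t * s * (t - s) := by
  set r := b / ℓ * t with hr_def
  have hr : ℓ * r = b * t := by rw [hr_def]; field_simp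
  have hr0 : 0 < r := by positivity
  have hrt : r ≤ 1 / 2 * t := mul_le_mul_of_nonneg_right hρ ht.le
  have hsr : r / 2 ≤ s := le_trans (by nlinarith) hs.1
  have hs0 : 0 < s := lt_of_lt_of_le (by positivity) hsr
  have hrs : (r - s) ^ 2 ≤ (r * m / 2) ^ 2 :=
    pow_le_pow_left₀ (sub_nonneg.2 hs.2) (by linarith [hs.1]) 2
  refine le_of_mul_le_mul_left ?_ hℓ
  calc ℓ * (ℓ * s - b * t) ^ 2 = ℓ ^ 3 * (r - s) ^ 2 := by rw [← hr]; ring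
    _ ≤ ℓ ^ 3 * (r * m / 2) ^ 2 := by gcongr
    _ = b * t ^ 2 * (m ^ 2 * (b * ℓ)) / 4 := by
      linear_combination ℓ * m ^ 2 / 4 * (ℓ * r + b * t) * hr
    _ ≤ b * t ^ 2 * t / 4 := by gcongr
    _ = ℓ * (t * (r / 2) * (t / 2)) := by linear_combination -t ^ 2 / 4 * hr
    _ ≤ ℓ * (t * s * (t - s)) := by gcongr; linarith [hs.2]

lemma continuousOn_fpd_sub_mul_fpd (x y t : ℝ) :
    ContinuousOn (fun s => fpd x (t - s) * fpd y s) (Ioo 0 t) := fun _ hs =>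
  (((continuousAt_fpd x (sub_pos.2 hs.2).ne').comp (continuousAt_const.sub continuousAt_id)).mul
    (continuousAt_fpd y hs.1.ne')).continuousWithinAt

lemma mul_le_integral_fpd_sub_mul_fpd {b ℓ t m : ℝ} (hb : 0 < b) (hℓ : 0 < ℓ)
    (hρ : b / ℓ ≤ 1 / 2) (ht : 0 < t) (hm0 : 0 ≤ m) (hm1 : m ≤ 1) (hm : m ^ 2 * (b * ℓ) ≤ t) :
    b / ℓ * t * m / 2 * (fpd ℓ t * (ℓ / (2 * t)) * (√(2 * π * (b / ℓ * t)))⁻¹ * exp (-1 / 2)) ≤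
      ∫ s in (b / ℓ * t / 2)..(b / ℓ * t), fpd (ℓ - b) (t - s) * fpd b s := by
  have hr : 0 < b / ℓ * t := by positivity
  have hrt : b / ℓ * t ≤ 1 / 2 * t := mul_le_mul_of_nonneg_right hρ ht.le
  have hwindow : Icc (b / ℓ * t / 2) (b / ℓ * t) ⊆ Ioo 0 t := fun s hs =>
    ⟨lt_of_lt_of_le (by positivity) hs.1, by linarith [hs.2]⟩
  have hℓb : 0 ≤ ℓ - b := by rw [div_le_iff₀ hℓ] at hρ; linarith
  convert mul_le_integral_of_le_on_Icc (by nlinarith) (by nlinarith) le_rfl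
    (((continuousOn_fpd_sub_mul_fpd _ _ _).mono hwindow).intervalIntegrable_of_Icc (by linarith))
    (fun s hs => mul_nonneg (fpd_nonneg hℓb (sub_pos.2 (hwindow hs).2).le)
      (fpd_nonneg hb.le (hwindow hs).1.le))
    (fun s hs => fpd_sub_mul_fpd_ge hb hℓ hρ ht ⟨le_trans (by nlinarith) hs.1, hs.2⟩
      (sq_mul_sub_le_of_mem_window hb hℓ hρ ht hm1 hm hs)) using 1
  ring

theorem stmt5 : ∃ c : ℝ, 0 < c ∧ ∀ b ℓ t : ℝ, 0 < b → b < ℓ → b / ℓ ≤ 1 / 2 → 0 < t →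
    c * min 1 (Real.sqrt (b * ℓ / t)) * fpd ℓ t ≤
      ∫ s in (b / ℓ * t / 2)..(b / ℓ * t), fpd (ℓ - b) (t - s) * fpd b s := by
  refine ⟨exp (-1 / 2) / (4 * √(2 * π)), by positivity, fun b ℓ t hb hbℓ hρ ht => ?_⟩
  have hℓ : 0 < ℓ := hb.trans hbℓ
  set v := √(b * ℓ / t)
  have hv : 0 < v := sqrt_pos.2 (by positivity)
  set m := min 1 v⁻¹
  have hm0 : 0 ≤ m := le_min zero_le_one (inv_nonneg.2 hv.le)
  have hm : m ^ 2 * (b * ℓ) ≤ t := calc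
    m ^ 2 * (b * ℓ) ≤ (v⁻¹) ^ 2 * (b * ℓ) := by gcongr; exact min_le_right _ _
    _ = t := by rw [inv_pow, sq_sqrt (by positivity)]; field_simp
  have hmv : m * v = min 1 v := by
    rw [min_mul_of_nonneg _ _ hv.le, inv_mul_cancel₀ hv.ne', one_mul, min_comm]
  have hsqrt : (√(2 * π * (b / ℓ * t)))⁻¹ = v / (√(2 * π) * b) := by
    have : √(2 * π * (b / ℓ * t)) * v = √(2 * π) * b := by
      rw [← sqrt_mul (by positivity), show 2 * π * (b / ℓ * t) * (b * ℓ / t) = 2 * π * b ^ 2 by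
        field_simp, sqrt_mul (by positivity), sqrt_sq hb.le]
    rw [eq_div_iff (by positivity), ← this]
    field_simp
  refine le_trans (le_of_eq ?_)
    (mul_le_integral_fpd_sub_mul_fpd hb hℓ hρ ht hm0 (min_le_left _ _) hm)
  rw [hsqrt, ← hmv]
  field_simp
  ring
end

section
/- Let d ≥ 1, ν = d/2 − 1, α ∈ ℝ, and p_t^{(d)}(x) = (2πt)^{−d/2} e^{−x²/(2t)}. There is a constant c > 0 depending only on d and α such that for all 0 < b < ℓ with ρ₁ := b/ℓ ≤ 1/2 and all t > 0, ∫_{ρ₁t/2}^{ρ₁t} p_{t−s}^{(d)}(ℓ−b) p_s^{(d)}(b) s^α ds ≥ c (ρ₁ t)^{α−ν} · min(√(t/(bℓ)), 1) · p_t^{(d)}(ℓ). -/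
/-!
Let `s₀ = ρ₁ t = b t / ℓ`, the time at which the straight path from `0` to `ℓ` passes `b`. There the
Gaussian exponents match exactly: `(ℓ - b)² / (t - s₀) + b² / s₀ = ℓ² / t`. Expanding `1 / s` and
`1 / (t - s)` to second order around `s₀`, the first-order terms cancel and the excess is at most
`3 ℓ³ (s₀ - s)² / (b t³)`, which is `≤ 3/4` on the window
`s₀ - s ≤ (s₀ / 2) · min (√(t / (b ℓ))) 1`.
On that window the integrand is at least `e^{-3/8} p_t(ℓ) (2π s₀)^{-d/2} 2^{-|α|} s₀^α`, and the
window has length `(s₀ / 2) · min (√(t / (b ℓ))) 1`.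
-/

open Real intervalIntegral

lemma inv_add_le_taylor {τ u : ℝ} (hτ : 0 < τ) (hu : 0 ≤ u) :
    (τ + u)⁻¹ ≤ τ⁻¹ - u / τ ^ 2 + u ^ 2 / τ ^ 3 := by
  have hdiff : τ⁻¹ - u / τ ^ 2 + u ^ 2 / τ ^ 3 - (τ + u)⁻¹ = u ^ 3 / (τ ^ 3 * (τ + u)) := by
    field_simp; ring
  have : 0 ≤ u ^ 3 / (τ ^ 3 * (τ + u)) := by positivity
  linarith

lemma inv_sub_le_taylor {σ u : ℝ} (hσ : 0 < σ) (hu : 2 * u ≤ σ) :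
    (σ - u)⁻¹ ≤ σ⁻¹ + u / σ ^ 2 + 2 * u ^ 2 / σ ^ 3 := by
  have hσu : 0 < σ - u := by linarith
  have hdiff : σ⁻¹ + u / σ ^ 2 + 2 * u ^ 2 / σ ^ 3 - (σ - u)⁻¹
      = u ^ 2 * (σ - 2 * u) / (σ ^ 3 * (σ - u)) := by
    field_simp; ring
  have : 0 ≤ u ^ 2 * (σ - 2 * u) / (σ ^ 3 * (σ - u)) :=
    div_nonneg (mul_nonneg (sq_nonneg u) (by linarith)) (by positivity)
  linarith

lemma two_rpow_neg_abs_mul_rpow_le {x y : ℝ} (α : ℝ) (hx : 0 < x) (hxy : x ≤ y)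
    (hyx : y ≤ 2 * x) :
    2 ^ (-|α|) * y ^ α ≤ x ^ α := by
  rcases le_or_gt 0 α with hα | hα
  · rw [abs_of_nonneg hα, rpow_neg zero_le_two, ← div_eq_inv_mul,
      ← div_rpow (hx.le.trans hxy) zero_le_two]
    exact rpow_le_rpow (by linarith) (by linarith) hα
  · rw [abs_of_neg hα, neg_neg]
    calc 2 ^ α * y ^ α ≤ 1 * y ^ α :=
          mul_le_mul_of_nonneg_right (rpow_le_one_of_one_le_of_nonpos one_le_two hα.le)
            (rpow_nonneg (by linarith) α)
      _ ≤ x ^ α := by rw [one_mul]; exact rpow_le_rpow_of_nonpos hx hxy hα.le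

lemma mul_le_integral_of_le_on {f : ℝ → ℝ} {a b c m : ℝ} (hab : a ≤ b) (hbc : b ≤ c)
    (hf : IntervalIntegrable f MeasureTheory.volume a c) (hf0 : ∀ x ∈ Set.Icc a c, 0 ≤ f x)
    (hm : ∀ x ∈ Set.Icc b c, m ≤ f x) :
    (c - b) * m ≤ ∫ x in a..c, f x := by
  have hfbc : IntervalIntegrable f MeasureTheory.volume b c :=
    hf.mono_set (by rw [Set.uIcc_of_le hbc, Set.uIcc_of_le (hab.trans hbc)]; gcongr)
  calc (c - b) * m = ∫ _ in b..c, m := by rw [integral_const, smul_eq_mul]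
    _ ≤ ∫ x in b..c, f x := integral_mono_on hbc intervalIntegrable_const hfbc hm
    _ ≤ ∫ x in a..c, f x := by
      refine integral_mono_interval hab hbc le_rfl ?_ hf
      filter_upwards [MeasureTheory.ae_restrict_mem measurableSet_Ioc] with x hx
      exact hf0 x (Set.Ioc_subset_Icc_self hx)

lemma heatKernel_pos (d : ℕ) {t : ℝ} (ht : 0 < t) (x : ℝ) : 0 < heatKernel d t x := by
  unfold heatKernel; positivity

lemma mul_exp_le_heatKernel (d : ℕ) {s τ : ℝ} (hs : 0 < s) (hsτ : s ≤ τ) (x : ℝ) :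
    (2 * π * τ) ^ (-(d : ℝ) / 2) * exp (-x ^ 2 / (2 * s)) ≤ heatKernel d s x := by
  unfold heatKernel
  have hd : -(d : ℝ) / 2 ≤ 0 := by have : (0:ℝ) ≤ d := d.cast_nonneg; linarith
  exact mul_le_mul_of_nonneg_right (rpow_le_rpow_of_nonpos (by positivity) (by gcongr) hd)
    (exp_pos _).le

lemma continuousAt_heatKernel (d : ℕ) {t : ℝ} (ht : 0 < t) (x : ℝ) :
    ContinuousAt (fun τ => heatKernel d τ x) t := by
  unfold heatKernel
  have h2πt : 0 < 2 * π * t := by positivity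
  exact ((continuousAt_const.mul continuousAt_id).rpow_const (Or.inl h2πt.ne')).mul
    (continuous_exp.continuousAt.comp (continuousAt_const.div
      (continuousAt_const.mul continuousAt_id) (by positivity)))

lemma intervalIntegrable_heatKernel_mul_heatKernel_mul_rpow (d : ℕ) (α x y : ℝ) {a c t : ℝ}
    (ha : 0 < a) (hac : a ≤ c) (hct : c < t) :
    IntervalIntegrable (fun s => heatKernel d (t - s) x * heatKernel d s y * s ^ α)
      MeasureTheory.volume a c := by
  refine ContinuousOn.intervalIntegrable fun s hs => ContinuousAt.continuousWithinAt ?_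
  rw [Set.uIcc_of_le hac] at hs
  have hs0 : 0 < s := ha.trans_le hs.1
  have hst : 0 < t - s := by linarith [hs.2]
  exact (((continuousAt_heatKernel d hst x).comp (continuousAt_const.sub continuousAt_id)).mul
    (continuousAt_heatKernel d hs0 y)).mul (continuousAt_id.rpow_const (Or.inl hs0.ne'))

lemma sq_div_sub_add_sq_div_le {b ℓ t s : ℝ} (hb : 0 < b) (h2b : 2 * b ≤ ℓ) (ht : 0 < t)
    (hs : b / ℓ * t ≤ 2 * s) (hs' : s ≤ b / ℓ * t)
    (hgap : 4 * ℓ ^ 3 * (b / ℓ * t - s) ^ 2 ≤ b * t ^ 3) :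
    (ℓ - b) ^ 2 / (t - s) + b ^ 2 / s ≤ ℓ ^ 2 / t + 3 / 4 := by
  have hℓ : 0 < ℓ := by linarith
  set u := b / ℓ * t - s
  have hu : 0 ≤ u := by linarith
  have hs_eq : s = b / ℓ * t - u := by ring
  have hts_eq : t - s = (ℓ - b) / ℓ * t + u := by rw [hs_eq]; field_simp; ring
  have hsmall := inv_sub_le_taylor (σ := b / ℓ * t) (u := u) (by positivity) (by linarith)
  have hlarge := inv_add_le_taylor (τ := (ℓ - b) / ℓ * t) (u := u)
    (mul_pos (div_pos (by linarith) hℓ) ht) hu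
  have e1 : b ^ 2 * ((b / ℓ * t)⁻¹ + u / (b / ℓ * t) ^ 2 + 2 * u ^ 2 / (b / ℓ * t) ^ 3)
      = b * ℓ / t + ℓ ^ 2 * u / t ^ 2 + 2 * ℓ ^ 3 * u ^ 2 / (b * t ^ 3) := by
    field_simp
  have e2 : (ℓ - b) ^ 2 * (((ℓ - b) / ℓ * t)⁻¹ - u / ((ℓ - b) / ℓ * t) ^ 2
      + u ^ 2 / ((ℓ - b) / ℓ * t) ^ 3)
      = (ℓ - b) * ℓ / t - ℓ ^ 2 * u / t ^ 2 + ℓ ^ 3 * u ^ 2 / ((ℓ - b) * t ^ 3) := by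
    have : ℓ - b ≠ 0 := by linarith
    field_simp
  have hrem : 2 * ℓ ^ 3 * u ^ 2 / (b * t ^ 3) + ℓ ^ 3 * u ^ 2 / ((ℓ - b) * t ^ 3) ≤ 3 / 4 := by
    have h1 : ℓ ^ 3 * u ^ 2 / ((ℓ - b) * t ^ 3) ≤ ℓ ^ 3 * u ^ 2 / (b * t ^ 3) :=
      div_le_div_of_nonneg_left (by positivity) (by positivity) (by gcongr; linarith)
    have h2 : ℓ ^ 3 * u ^ 2 / (b * t ^ 3) ≤ 1 / 4 := by
      rw [div_le_iff₀ (by positivity)]; linarith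
    have : 2 * ℓ ^ 3 * u ^ 2 / (b * t ^ 3) = 2 * (ℓ ^ 3 * u ^ 2 / (b * t ^ 3)) := by ring
    linarith
  calc (ℓ - b) ^ 2 / (t - s) + b ^ 2 / s
      = (ℓ - b) ^ 2 * ((ℓ - b) / ℓ * t + u)⁻¹ + b ^ 2 * (b / ℓ * t - u)⁻¹ := by
        rw [← hts_eq, ← hs_eq, div_eq_mul_inv, div_eq_mul_inv]
    _ ≤ (ℓ - b) * ℓ / t - ℓ ^ 2 * u / t ^ 2 + ℓ ^ 3 * u ^ 2 / ((ℓ - b) * t ^ 3)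
        + (b * ℓ / t + ℓ ^ 2 * u / t ^ 2 + 2 * ℓ ^ 3 * u ^ 2 / (b * t ^ 3)) := by
        rw [← e1, ← e2]; gcongr
    _ ≤ ℓ ^ 2 / t + 3 / 4 := by
        have : (ℓ - b) * ℓ / t + b * ℓ / t = ℓ ^ 2 / t := by field_simp; ring
        linarith

lemma four_mul_pow_three_mul_sq_le {b ℓ t u : ℝ} (hb : 0 < b) (hℓ : 0 < ℓ) (ht : 0 < t)
    (hu0 : 0 ≤ u) (hu : u ≤ min (√(t / (b * ℓ))) 1 * (b / ℓ * t) / 2) :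
    4 * ℓ ^ 3 * u ^ 2 ≤ b * t ^ 3 := by
  have hu' : u ≤ √(t / (b * ℓ)) * (b / ℓ * t) / 2 :=
    hu.trans (by gcongr; exact min_le_left _ _)
  have hsq : u ^ 2 ≤ t / (b * ℓ) * (b / ℓ * t) ^ 2 / 4 := by
    calc u ^ 2 ≤ (√(t / (b * ℓ)) * (b / ℓ * t) / 2) ^ 2 := by gcongr
      _ = t / (b * ℓ) * (b / ℓ * t) ^ 2 / 4 := by
        rw [div_pow, mul_pow, sq_sqrt (by positivity)]; ring
  calc 4 * ℓ ^ 3 * u ^ 2 ≤ 4 * ℓ ^ 3 * (t / (b * ℓ) * (b / ℓ * t) ^ 2 / 4) := by gcongr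
    _ = b * t ^ 3 := by field_simp

lemma le_heatKernel_mul_heatKernel_mul_rpow (d : ℕ) (α : ℝ) {b ℓ t s : ℝ} (hb : 0 < b)
    (h2b : 2 * b ≤ ℓ) (ht : 0 < t) (hs : b / ℓ * t ≤ 2 * s) (hs' : s ≤ b / ℓ * t)
    (hgap : 4 * ℓ ^ 3 * (b / ℓ * t - s) ^ 2 ≤ b * t ^ 3) :
    heatKernel d t ℓ * (2 * π * (b / ℓ * t)) ^ (-(d : ℝ) / 2) * exp (-(3 / 8))
        * (2 ^ (-|α|) * (b / ℓ * t) ^ α)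
      ≤ heatKernel d (t - s) (ℓ - b) * heatKernel d s b * s ^ α := by
  have hℓ : 0 < ℓ := by linarith
  have hs₀t : 2 * (b / ℓ * t) ≤ t := by
    have : b / ℓ ≤ 1 / 2 := by rw [div_le_iff₀ hℓ]; linarith
    nlinarith
  set s₀ := b / ℓ * t
  have hs_pos : 0 < s := by linarith [show 0 < s₀ by positivity]
  calc heatKernel d t ℓ * (2 * π * s₀) ^ (-(d : ℝ) / 2) * exp (-(3 / 8)) * (2 ^ (-|α|) * s₀ ^ α)
      = (2 * π * t) ^ (-(d : ℝ) / 2) * (2 * π * s₀) ^ (-(d : ℝ) / 2)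
          * exp (-(ℓ ^ 2 / t + 3 / 4) / 2) * (2 ^ (-|α|) * s₀ ^ α) := by
        rw [show -(ℓ ^ 2 / t + 3 / 4) / 2 = -ℓ ^ 2 / (2 * t) + -(3 / 8) by ring, exp_add,
          heatKernel]
        ring
    _ ≤ (2 * π * t) ^ (-(d : ℝ) / 2) * (2 * π * s₀) ^ (-(d : ℝ) / 2)
          * exp (-((ℓ - b) ^ 2 / (t - s) + b ^ 2 / s) / 2) * s ^ α := by
        gcongr _ * exp (-?_ / 2) * ?_
        · exact sq_div_sub_add_sq_div_le hb h2b ht hs hs' hgap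
        · exact two_rpow_neg_abs_mul_rpow_le α hs_pos hs' (by linarith)
    _ = ((2 * π * t) ^ (-(d : ℝ) / 2) * exp (-(ℓ - b) ^ 2 / (2 * (t - s))))
          * ((2 * π * s₀) ^ (-(d : ℝ) / 2) * exp (-b ^ 2 / (2 * s))) * s ^ α := by
        rw [show -((ℓ - b) ^ 2 / (t - s) + b ^ 2 / s) / 2
          = -(ℓ - b) ^ 2 / (2 * (t - s)) + -b ^ 2 / (2 * s) by
            have : t - s ≠ 0 := by linarith
            field_simp; ring, exp_add]
        ring
    _ ≤ heatKernel d (t - s) (ℓ - b) * heatKernel d s b * s ^ α := by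
        gcongr ?_ * ?_ * _
        · exact (heatKernel_pos d (by linarith) _).le
        · exact mul_exp_le_heatKernel d (by linarith) (by linarith) _
        · exact mul_exp_le_heatKernel d hs_pos hs' _

theorem stmt6_general (d : ℕ) (α : ℝ) :
    ∃ c : ℝ, 0 < c ∧ ∀ b ℓ t : ℝ, 0 < b → b < ℓ → b / ℓ ≤ 1 / 2 → 0 < t →
      c * (b / ℓ * t) ^ (α - ((d : ℝ) / 2 - 1)) * min (Real.sqrt (t / (b * ℓ))) 1 *
          heatKernel d t ℓ ≤
        ∫ s in (b / ℓ * t / 2)..(b / ℓ * t),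
          heatKernel d (t - s) (ℓ - b) * heatKernel d s b * s ^ α := by
  refine ⟨(2 * π) ^ (-(d : ℝ) / 2) * 2 ^ (-|α|) * exp (-(3 / 8)) / 2, by positivity, ?_⟩
  intro b ℓ t hb hbℓ hρ ht
  have hℓ : 0 < ℓ := hb.trans hbℓ
  have h2b : 2 * b ≤ ℓ := by rw [div_le_iff₀ hℓ] at hρ; linarith
  have hs₀t : b / ℓ * t < t := by
    have : b / ℓ < 1 := by linarith
    nlinarith
  set s₀ := b / ℓ * t
  set M := min (√(t / (b * ℓ))) 1
  have hs₀ : 0 < s₀ := by positivity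
  have hM0 : 0 < M := lt_min (sqrt_pos.2 (by positivity)) one_pos
  have hM1 : M ≤ 1 := min_le_right _ _
  calc _ = (s₀ - (s₀ - M * s₀ / 2)) * (heatKernel d t ℓ * (2 * π * s₀) ^ (-(d : ℝ) / 2)
          * exp (-(3 / 8)) * (2 ^ (-|α|) * s₀ ^ α)) := by
        rw [show α - ((d : ℝ) / 2 - 1) = α + -(d : ℝ) / 2 + 1 by ring, rpow_add hs₀,
          rpow_add hs₀, rpow_one, mul_rpow (by positivity) hs₀.le]
        ring
    _ ≤ _ := by
      refine mul_le_integral_of_le_on (by nlinarith) (by nlinarith)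
        (intervalIntegrable_heatKernel_mul_heatKernel_mul_rpow d α _ _ (by positivity)
          (by linarith) hs₀t) (fun s hs => ?_) (fun s hs => ?_)
      · have hs0 : 0 < s := by linarith [hs.1]
        have := heatKernel_pos d (show 0 < t - s by linarith [hs.2]) (ℓ - b)
        have := heatKernel_pos d hs0 b
        positivity
      · exact le_heatKernel_mul_heatKernel_mul_rpow d α hb h2b ht (by nlinarith [hs.1]) hs.2
          (four_mul_pow_three_mul_sq_le hb hℓ ht (by linarith [hs.2]) (by linarith [hs.1]))

theorem stmt6 (d : ℕ) (hd : 1 ≤ d) (α : ℝ) :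
    ∃ c : ℝ, 0 < c ∧ ∀ b ℓ t : ℝ, 0 < b → b < ℓ → b / ℓ ≤ 1 / 2 → 0 < t →
      c * (b / ℓ * t) ^ (α - ((d : ℝ) / 2 - 1)) * min (Real.sqrt (t / (b * ℓ))) 1 *
          heatKernel d t ℓ ≤
        ∫ s in (b / ℓ * t / 2)..(b / ℓ * t),
          heatKernel d (t - s) (ℓ - b) * heatKernel d s b * s ^ α :=
  stmt6_general d α
end
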